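/- Let m : ℕ → ℝ be a positive sequence on dyadic indices satisfying 1/4 ≤ m(2λ)/m(λ) ≤ 4, and let Λ(m) be an m-representative set constructed so that consecutive elements λ_j satisfy λ_{j+1} ≥ 2 λ_j^+ (where λ_j^+ is the largest μ with λ_j ≺ μ). Then for each dyadic μ and each K ∈ ℕ, the number of elements λ ∈ Λ(m) satisfying 2^K m(μ) ≥ m(λ)(λ²μ⁻² + μ²λ⁻²) is at most 4(K+4). -/
import Mathlib

open scoped ENNReal

def dyadPrec (m : ℕ → ℝ) (j k : ℕ) : Prop :=
  m j * (((2:ℝ)^j)^2 / ((2:ℝ)^k)^2 + ((2:ℝ)^k)^2 / ((2:ℝ)^j)^2) ≤ 2 * m k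

noncomputable def mInfty (m : ℕ → ℝ) : ℝ≥0∞ :=
  ⨆ j, ENNReal.ofReal (((2:ℝ)^j)^2 * m j)

def precTop (m : ℕ → ℝ) : Option ℕ → ℕ → Prop
  | some j, k => dyadPrec m j k
  | none, k => mInfty m ≤ ENNReal.ofReal (2 * m k * ((2:ℝ)^k)^2)

namespace MRepAux

lemma Xeq (j : ℕ) : ((2:ℝ)^j)^2 = (4:ℝ)^j := by
  rw [← pow_mul, mul_comm, pow_mul]; norm_num

lemma ineq_poly (m : ℕ → ℝ) (c : ℝ) (j k : ℕ) :
    m j * (((2:ℝ)^j)^2 / ((2:ℝ)^k)^2 + ((2:ℝ)^k)^2 / ((2:ℝ)^j)^2) ≤ c * m k ↔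
    m j * ((4:ℝ)^j * (4:ℝ)^j + (4:ℝ)^k * (4:ℝ)^k) ≤ c * m k * ((4:ℝ)^k * (4:ℝ)^j) := by
  rw [Xeq, Xeq, div_add_div _ _ (by positivity : ((4:ℝ)^k) ≠ 0)
    (by positivity : ((4:ℝ)^j) ≠ 0), ← mul_div_assoc, div_le_iff₀ (by positivity)]

lemma nat_pow_ineq (t K : ℕ) (h : 11*K + 1 ≤ 10*t) : (17:ℕ)^t * 2^K < 32^t := by
  by_contra hc
  push_neg at hc
  have h10 : (32:ℕ)^(10*t) ≤ 17^(10*t) * 2^(10*K) := by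
    calc (32:ℕ)^(10*t) = (32^t)^10 := by rw [← pow_mul, mul_comm]
    _ ≤ (17^t*2^K)^10 := Nat.pow_le_pow_left hc 10
    _ = 17^(10*t)*2^(10*K) := by
        rw [mul_pow, ← pow_mul, ← pow_mul, mul_comm t 10, mul_comm K 10]
  have e32 : (32:ℕ)^(11*K) = 2^(55*K) := by
    rw [show (32:ℕ) = 2^5 by norm_num, ← pow_mul]
    congr 1; ring
  have hlt : (17:ℕ)^(10*t) * 2^(10*K) < 32^(10*t) := by
    obtain ⟨r, hr1, hr2⟩ : ∃ r, 10*t = 11*K + r ∧ 1 ≤ r := ⟨10*t - 11*K, by omega, by omega⟩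
    rw [hr1]
    have hA : (17:ℕ)^(11*K) * 2^(10*K) ≤ 2^(55*K) := by
      calc (17:ℕ)^(11*K)*2^(10*K) = (17^11*2^10)^K := by
            rw [mul_pow, ← pow_mul, ← pow_mul, mul_comm 11 K, mul_comm 10 K]
      _ ≤ (2^55)^K := Nat.pow_le_pow_left (by norm_num) K
      _ = 2^(55*K) := by rw [← pow_mul, mul_comm]
    have hB : (17:ℕ)^r < 32^r := Nat.pow_lt_pow_left (by norm_num) (by omega)
    calc (17:ℕ)^(11*K + r) * 2^(10*K) = (17^(11*K)*2^(10*K))*17^r := by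
          rw [pow_add]; ring
    _ ≤ 2^(55*K)*17^r := mul_le_mul_left hA _
    _ < 2^(55*K)*32^r := mul_lt_mul_of_pos_left hB (by positivity)
    _ = 32^(11*K+r) := by rw [pow_add, e32]
  exact absurd hlt (not_lt.mpr h10)

lemma chainBound (n : ℕ) : ∀ (T : Finset ℕ) (f : ℕ → ℝ) (a b : ℝ),
    (∀ j ∈ T, a ≤ f j ∧ f j ≤ b) →
    (∀ j ∈ T, ∀ j' ∈ T, j < j' → 32 * f j' ≤ 17 * f j) →
    (17:ℝ)^n * b < 32^n * a → T.card ≤ n := by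
  induction n with
  | zero =>
    intro T f a b hw _ hab
    simp only [pow_zero, one_mul] at hab
    rcases T.eq_empty_or_nonempty with rfl | ⟨j, hj⟩
    · simp
    · exfalso; linarith [(hw j hj).1, (hw j hj).2]
  | succ n ih =>
    intro T f a b hw hd hab
    rcases T.eq_empty_or_nonempty with rfl | hne
    · simp
    · have hj₀ : T.min' hne ∈ T := T.min'_mem hne
      set j₀ := T.min' hne
      have hb0 : f j₀ ≤ b := (hw j₀ hj₀).2
      have h1 : (T.erase j₀).card ≤ n := by
        apply ih (T.erase j₀) f a (17/32*b)
        · intro j hj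
          have hjT := Finset.mem_of_mem_erase hj
          refine ⟨(hw j hjT).1, ?_⟩
          have hne' : j ≠ j₀ := Finset.ne_of_mem_erase hj
          have hlt : j₀ < j := lt_of_le_of_ne (T.min'_le j hjT) (Ne.symm hne')
          have := hd j₀ hj₀ j hjT hlt
          linarith
        · intro x hx y hy hxy
          exact hd x (Finset.mem_of_mem_erase hx) y (Finset.mem_of_mem_erase hy) hxy
        · rw [pow_succ, pow_succ] at hab
          linarith
      have := Finset.card_erase_of_mem hj₀
      omega

lemma chainBound2 (n : ℕ) : ∀ (T : Finset ℕ) (f : ℕ → ℝ) (a b : ℝ),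
    (∀ j ∈ T, a ≤ f j ∧ f j ≤ b) →
    (∀ j ∈ T, ∀ j' ∈ T, ∀ j'' ∈ T, j < j' → j' < j'' → 32 * f j ≤ 17 * f j'') →
    (17:ℝ)^(n+1) * b < 32^(n+1) * a → T.card ≤ 2*(n+1) := by
  induction n with
  | zero =>
    intro T f a b hw hd hab
    by_contra hc
    push_neg at hc
    have hne : T.Nonempty := Finset.card_pos.mp (by omega)
    have hj₁ : T.min' hne ∈ T := T.min'_mem hne
    have hj₃ : T.max' hne ∈ T := T.max'_mem hne
    set j₁ := T.min' hne
    set j₃ := T.max' hne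
    have hmid : ((T.erase j₁).erase j₃).Nonempty := by
      rw [← Finset.card_pos]
      have e1 : T.card - 1 ≤ (T.erase j₁).card := Finset.pred_card_le_card_erase
      have e2 : (T.erase j₁).card - 1 ≤ ((T.erase j₁).erase j₃).card :=
        Finset.pred_card_le_card_erase
      omega
    obtain ⟨j₂, hj₂m⟩ := hmid
    have hj₂e : j₂ ∈ T.erase j₁ := Finset.mem_of_mem_erase hj₂m
    have hj₂ : j₂ ∈ T := Finset.mem_of_mem_erase hj₂e
    have h12 : j₁ < j₂ := lt_of_le_of_ne (T.min'_le j₂ hj₂) (Ne.symm (Finset.ne_of_mem_erase hj₂e))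
    have h23 : j₂ < j₃ := lt_of_le_of_ne (T.le_max' j₂ hj₂) (Finset.ne_of_mem_erase hj₂m)
    have := hd j₁ hj₁ j₂ hj₂ j₃ hj₃ h12 h23
    rw [pow_one, pow_one] at hab
    linarith [(hw j₁ hj₁).1, (hw j₃ hj₃).2]
  | succ n ih =>
    intro T f a b hw hd hab
    by_cases hsmall : T.card ≤ 2
    · omega
    · push_neg at hsmall
      have hne : T.Nonempty := Finset.card_pos.mp (by omega)
      have hj₁ : T.min' hne ∈ T := T.min'_mem hne
      set j₁ := T.min' hne
      have hne2 : (T.erase j₁).Nonempty := by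
        rw [← Finset.card_pos, Finset.card_erase_of_mem hj₁]; omega
      have hj₂e : (T.erase j₁).min' hne2 ∈ T.erase j₁ := (T.erase j₁).min'_mem hne2
      set j₂ := (T.erase j₁).min' hne2
      have hj₂ : j₂ ∈ T := Finset.mem_of_mem_erase hj₂e
      have h12 : j₁ < j₂ := lt_of_le_of_ne (T.min'_le j₂ hj₂)
        (Ne.symm (Finset.ne_of_mem_erase hj₂e))
      set T' := (T.erase j₁).erase j₂ with hT'
      have hsub : ∀ x ∈ T', x ∈ T := fun x hx =>
        Finset.mem_of_mem_erase (Finset.mem_of_mem_erase hx)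
      have hgt : ∀ x ∈ T', j₂ < x := by
        intro x hx
        have hxe : x ∈ T.erase j₁ := Finset.mem_of_mem_erase hx
        exact lt_of_le_of_ne ((T.erase j₁).min'_le x hxe)
          (Ne.symm (Finset.ne_of_mem_erase hx))
      have h1 : T'.card ≤ 2*(n+1) := by
        apply ih T' f (32/17*a) b
        · intro x hx
          refine ⟨?_, (hw x (hsub x hx)).2⟩
          have h2x := hd j₁ hj₁ j₂ hj₂ x (hsub x hx) h12 (hgt x hx)
          have := (hw j₁ hj₁).1
          linarith
        · intro x hx y hy z hz hxy hyz
          exact hd x (hsub x hx) y (hsub y hy) z (hsub z hz) hxy hyz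
        · rw [pow_succ (17:ℝ) (n+1), pow_succ (32:ℝ) (n+1)] at hab
          linarith
      have e1 : (T.erase j₁).card = T.card - 1 := Finset.card_erase_of_mem hj₁
      have e2 : T'.card = (T.erase j₁).card - 1 := Finset.card_erase_of_mem hj₂e
      omega


section Core
variable {m : ℕ → ℝ} {Λ : Set (Option ℕ)}
variable (hpos : ∀ j, 0 < m j)
  (hratio : ∀ j, (1/4 : ℝ) ≤ m (j+1) / m j ∧ m (j+1) / m j ≤ 4)

include hpos hratio

lemma g_mono : Monotone (fun j => m j * (4:ℝ)^j) := by
  apply monotone_nat_of_le_succ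
  intro j
  have h1 : (1/4:ℝ) * m j ≤ m (j+1) := by
    have h := (hratio j).1
    rw [le_div_iff₀ (hpos j)] at h
    linarith
  have hp : (0:ℝ) < (4:ℝ)^j := by positivity
  show m j * (4:ℝ)^j ≤ m (j+1) * (4:ℝ)^(j+1)
  rw [pow_succ]
  nlinarith

lemma h_anti : Antitone (fun j => m j / (4:ℝ)^j) := by
  apply antitone_nat_of_succ_le
  intro j
  have h1 : m (j+1) ≤ 4 * m j := by
    have h := (hratio j).2
    rw [div_le_iff₀ (hpos j)] at h
    linarith
  have hp : (0:ℝ) < (4:ℝ)^j := by positivity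
  show m (j+1) / (4:ℝ)^(j+1) ≤ m j / (4:ℝ)^j
  rw [div_le_div_iff₀ (by positivity) hp, pow_succ]
  nlinarith

lemma prec_of_g {j k : ℕ} (hjk : k + 1 ≤ j)
    (hg : 17 * (m j * (4:ℝ)^j) ≤ 32 * (m k * (4:ℝ)^k)) : dyadPrec m j k := by
  rw [show dyadPrec m j k ↔ _ from ineq_poly m 2 j k]
  have hA : (0:ℝ) < (4:ℝ)^j := by positivity
  have hB : (0:ℝ) < (4:ℝ)^k := by positivity
  have hAB : 4 * (4:ℝ)^k ≤ (4:ℝ)^j := by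
    have h1 : (4:ℝ)^(k+1) ≤ 4^j := pow_le_pow_right₀ (by norm_num) hjk
    rw [pow_succ] at h1; linarith
  nlinarith [mul_le_mul_of_nonneg_right hg hA.le,
    mul_nonneg (mul_nonneg (hpos j).le (by linarith : (0:ℝ) ≤ (4:ℝ)^j - 4*(4:ℝ)^k))
      (by positivity : (0:ℝ) ≤ (4:ℝ)^j + 4*(4:ℝ)^k)]

lemma prec_of_h {j k : ℕ} (hjk : j + 1 ≤ k)
    (hh : 17 * (m j / (4:ℝ)^j) ≤ 32 * (m k / (4:ℝ)^k)) : dyadPrec m j k := by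
  rw [show dyadPrec m j k ↔ _ from ineq_poly m 2 j k]
  have hA : (0:ℝ) < (4:ℝ)^j := by positivity
  have hB : (0:ℝ) < (4:ℝ)^k := by positivity
  have hAB : 4 * (4:ℝ)^j ≤ (4:ℝ)^k := by
    have h1 : (4:ℝ)^(j+1) ≤ 4^k := pow_le_pow_right₀ (by norm_num) hjk
    rw [pow_succ] at h1; linarith
  have hh2 : 17*m j*(4:ℝ)^k ≤ 32*m k*(4:ℝ)^j := by
    rw [← div_le_div_iff₀ hA hB]
    simpa [mul_div_assoc] using hh
  nlinarith [mul_le_mul_of_nonneg_right hh2 hB.le,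
    mul_nonneg (mul_nonneg (hpos j).le (by linarith : (0:ℝ) ≤ (4:ℝ)^k - 4*(4:ℝ)^j))
      (by positivity : (0:ℝ) ≤ (4:ℝ)^k + 4*(4:ℝ)^j)]

lemma cond_g {j k : ℕ} {C : ℝ}
    (hc : m j * ((4:ℝ)^j*(4:ℝ)^j + (4:ℝ)^k*(4:ℝ)^k) ≤ C * ((4:ℝ)^k*(4:ℝ)^j)) :
    m j * (4:ℝ)^j ≤ C * (4:ℝ)^k := by
  have hA : (0:ℝ) < (4:ℝ)^j := by positivity
  have hB : (0:ℝ) < (4:ℝ)^k := by positivity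
  have h1 : (m j*(4:ℝ)^j)*(4:ℝ)^j ≤ (C*(4:ℝ)^k)*(4:ℝ)^j := by
    nlinarith [mul_pos (hpos j) (mul_pos hB hB)]
  exact le_of_mul_le_mul_right h1 hA

lemma cond_h {j k : ℕ} {C : ℝ}
    (hc : m j * ((4:ℝ)^j*(4:ℝ)^j + (4:ℝ)^k*(4:ℝ)^k) ≤ C * ((4:ℝ)^k*(4:ℝ)^j)) :
    m j / (4:ℝ)^j ≤ C / (4:ℝ)^k := by
  have hA : (0:ℝ) < (4:ℝ)^j := by positivity
  have hB : (0:ℝ) < (4:ℝ)^k := by positivity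
  rw [div_le_div_iff₀ hA hB]
  have h1 : (m j*(4:ℝ)^k)*(4:ℝ)^k ≤ (C*(4:ℝ)^j)*(4:ℝ)^k := by
    nlinarith [mul_pos (hpos j) (mul_pos hA hA)]
  exact le_of_mul_le_mul_right h1 hB

lemma triple_g
    (hsubs : ∀ k : ℕ, some k ∈ Λ →
      {x ∈ Λ | x ≠ some k ∧ precTop m x k}.Subsingleton)
    {j₁ j₂ j₃ : ℕ} (h1 : some j₁ ∈ Λ) (h2 : some j₂ ∈ Λ) (h3 : some j₃ ∈ Λ)
    (h12 : j₁ < j₂) (h23 : j₂ < j₃) :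
    32 * (m j₁ * (4:ℝ)^j₁) < 17 * (m j₃ * (4:ℝ)^j₃) := by
  by_contra hcon
  push_neg at hcon
  have hm : m j₂*(4:ℝ)^j₂ ≤ m j₃*(4:ℝ)^j₃ := g_mono hpos hratio (le_of_lt h23)
  have p2 : dyadPrec m j₂ j₁ := prec_of_g hpos hratio (by omega) (by linarith)
  have p3 : dyadPrec m j₃ j₁ := prec_of_g hpos hratio (by omega) (by linarith)
  have e := hsubs j₁ h1
    (show some j₂ ∈ {x ∈ Λ | x ≠ some j₁ ∧ precTop m x j₁} from
      ⟨h2, by simp only [ne_eq, Option.some.injEq]; omega, p2⟩)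
    (show some j₃ ∈ {x ∈ Λ | x ≠ some j₁ ∧ precTop m x j₁} from
      ⟨h3, by simp only [ne_eq, Option.some.injEq]; omega, p3⟩)
  simp only [Option.some.injEq] at e
  omega

lemma pair_h
    (hsep : ∀ j₁ j₂ : ℕ, some j₁ ∈ Λ → some j₂ ∈ Λ → j₁ < j₂ →
      (∀ l : ℕ, some l ∈ Λ → ¬ (j₁ < l ∧ l < j₂)) →
      ∀ l : ℕ, dyadPrec m j₁ l → l + 1 ≤ j₂) :
    ∀ n : ℕ, ∀ j j' : ℕ, some j ∈ Λ → some j' ∈ Λ → j < j' → j' - j ≤ n →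
      32 * (m j' / (4:ℝ)^j') < 17 * (m j / (4:ℝ)^j) := by
  intro n
  induction n with
  | zero => intro j j' _ _ hlt hle; omega
  | succ n ih =>
    intro j j' hj hj' hlt hle
    by_cases hmid : ∃ l : ℕ, some l ∈ Λ ∧ j < l ∧ l < j'
    · obtain ⟨l, hlΛ, hl1, hl2⟩ := hmid
      have r1 := ih j l hj hlΛ hl1 (by omega)
      have r2 := ih l j' hlΛ hj' hl2 (by omega)
      have hp : (0:ℝ) < m j / (4:ℝ)^j := div_pos (hpos j) (by positivity)
      linarith
    · have hnd : ¬ dyadPrec m j j' := by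
        intro hd
        have := hsep j j' hj hj' hlt (fun l hlΛ hll => hmid ⟨l, hlΛ, hll.1, hll.2⟩) j' hd
        omega
      rw [show dyadPrec m j j' ↔ _ from ineq_poly m 2 j j'] at hnd
      push_neg at hnd
      have hA : (0:ℝ) < (4:ℝ)^j := by positivity
      have hB : (0:ℝ) < (4:ℝ)^j' := by positivity
      have hAB : 4 * (4:ℝ)^j ≤ (4:ℝ)^j' := by
        have h1 : (4:ℝ)^(j+1) ≤ 4^j' := pow_le_pow_right₀ (by norm_num) hlt
        rw [pow_succ] at h1; linarith
      have key : 32*m j'*(4:ℝ)^j < 17*m j*(4:ℝ)^j' := by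
        nlinarith [hnd,
          mul_nonneg (mul_nonneg (hpos j).le
            (by linarith : (0:ℝ) ≤ (4:ℝ)^j' - 4*(4:ℝ)^j))
            (by positivity : (0:ℝ) ≤ (4:ℝ)^j' + 4*(4:ℝ)^j), hA, hB, mul_pos hA hB]
      rw [show (32:ℝ)*(m j'/(4:ℝ)^j') = (32*m j')/(4:ℝ)^j' by ring,
        show (17:ℝ)*(m j/(4:ℝ)^j) = (17*m j)/(4:ℝ)^j by ring,
        div_lt_div_iff₀ hB hA]
      linarith

end Core

end MRepAux
/-- Counting bound for an `m`-representative set: if `Λ` is `m`-representative with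
consecutive (finite) elements `λ_j < λ_{j+1}` satisfying `λ_{j+1} ≥ 2 λ_j^+`
(encoded by: any dyadic `2^l` with `λ_j ≺ 2^l` satisfies `2^l < λ_{j+1}`, i.e. `l < j₂`),
then for each dyadic `μ = 2^k` and each `K ∈ ℕ`, the number of dyadic `λ = 2^j ∈ Λ` with
`m(λ)(λ²μ⁻² + μ²λ⁻²) ≤ 2^K m(μ)` is at most `4(K+4)`. -/
theorem m_representative_counting_bound (m : ℕ → ℝ) (hpos : ∀ j, 0 < m j)
    (hratio : ∀ j, (1/4 : ℝ) ≤ m (j+1) / m j ∧ m (j+1) / m j ≤ 4)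
    (Λ : Set (Option ℕ))
    (hrep : ∀ k : ℕ, ∃ x ∈ Λ, precTop m x k)
    (hsubs : ∀ k : ℕ, some k ∈ Λ →
      {x ∈ Λ | x ≠ some k ∧ precTop m x k}.Subsingleton)
    (hsep : ∀ j₁ j₂ : ℕ, some j₁ ∈ Λ → some j₂ ∈ Λ → j₁ < j₂ →
      (∀ l : ℕ, some l ∈ Λ → ¬ (j₁ < l ∧ l < j₂)) →
      ∀ l : ℕ, dyadPrec m j₁ l → l + 1 ≤ j₂) :
    ∀ (k K : ℕ),
      ({j : ℕ | some j ∈ Λ ∧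
          m j * (((2:ℝ)^j)^2 / ((2:ℝ)^k)^2 + ((2:ℝ)^k)^2 / ((2:ℝ)^j)^2)
            ≤ 2^K * m k}).Finite ∧
      ({j : ℕ | some j ∈ Λ ∧
          m j * (((2:ℝ)^j)^2 / ((2:ℝ)^k)^2 + ((2:ℝ)^k)^2 / ((2:ℝ)^j)^2)
            ≤ 2^K * m k}).ncard ≤ 4 * (K + 4) := by
  intro k K
  classical
  set S : Set ℕ := {j : ℕ | some j ∈ Λ ∧
      m j * (((2:ℝ)^j)^2 / ((2:ℝ)^k)^2 + ((2:ℝ)^k)^2 / ((2:ℝ)^j)^2)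
        ≤ 2^K * m k} with hSdef
  set t : ℕ := 11*K/10 + 1 with htdef
  have hnum : (17:ℝ)^t * 2^K < 32^t := by
    exact_mod_cast MRepAux.nat_pow_ineq t K (by omega)
  have hk4 : (0:ℝ) < (4:ℝ)^k := by positivity
  have key : ∀ T : Finset ℕ, ↑T ⊆ S → T.card ≤ 4*(K+4) := by
    intro T hT
    have T1 : (T.filter (fun j => j ≤ k)).card ≤ t := by
      apply MRepAux.chainBound t _ (fun j => m j / (4:ℝ)^j)
        (m k/(4:ℝ)^k) ((2^K*m k)/(4:ℝ)^k)
      · intro j hjT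
        rw [Finset.mem_filter] at hjT
        obtain ⟨hjT, hjk⟩ := hjT
        obtain ⟨hjΛ, hjc⟩ := hT hjT
        refine ⟨MRepAux.h_anti hpos hratio hjk, ?_⟩
        exact MRepAux.cond_h hpos hratio ((MRepAux.ineq_poly m (2^K) j k).mp hjc)
      · intro j hj j' hj' hlt
        rw [Finset.mem_filter] at hj hj'
        obtain ⟨hjΛ, -⟩ := hT hj.1
        obtain ⟨hj'Λ, -⟩ := hT hj'.1
        exact (MRepAux.pair_h hpos hratio hsep (j'-j) j j' hjΛ hj'Λ hlt le_rfl).le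
      · have hq : (0:ℝ) < m k/(4:ℝ)^k := div_pos (hpos k) hk4
        calc (17:ℝ)^t*((2^K*m k)/(4:ℝ)^k) = (17^t*2^K)*(m k/(4:ℝ)^k) := by ring
        _ < 32^t*(m k/(4:ℝ)^k) := mul_lt_mul_of_pos_right hnum hq
    have T2 : (T.filter (fun j => ¬ j ≤ k)).card ≤ 2*t := by
      have htt : t - 1 + 1 = t := by omega
      have h2 := MRepAux.chainBound2 (t-1) (T.filter (fun j => ¬ j ≤ k))
        (fun j => m j * (4:ℝ)^j) (m k*(4:ℝ)^k) ((2^K*m k)*(4:ℝ)^k) ?_ ?_ ?_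
      · rw [htt] at h2; exact h2
      · intro j hjT
        rw [Finset.mem_filter] at hjT
        obtain ⟨hjT, hjk⟩ := hjT
        obtain ⟨hjΛ, hjc⟩ := hT hjT
        refine ⟨MRepAux.g_mono hpos hratio (by omega : k ≤ j), ?_⟩
        exact MRepAux.cond_g hpos hratio ((MRepAux.ineq_poly m (2^K) j k).mp hjc)
      · intro x hx y hy z hz hxy hyz
        rw [Finset.mem_filter] at hx hy hz
        obtain ⟨hxΛ, -⟩ := hT hx.1
        obtain ⟨hyΛ, -⟩ := hT hy.1
        obtain ⟨hzΛ, -⟩ := hT hz.1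
        exact (MRepAux.triple_g hpos hratio hsubs hxΛ hyΛ hzΛ hxy hyz).le
      · rw [htt]
        have hq : (0:ℝ) < m k*(4:ℝ)^k := mul_pos (hpos k) hk4
        calc (17:ℝ)^t*((2^K*m k)*(4:ℝ)^k) = (17^t*2^K)*(m k*(4:ℝ)^k) := by ring
        _ < 32^t*(m k*(4:ℝ)^k) := mul_lt_mul_of_pos_right hnum hq
    have hcc := Finset.card_filter_add_card_filter_not
      (s := T) (p := fun j => j ≤ k)
    omega
  have hfin : S.Finite := by
    by_contra hinf
    obtain ⟨T, hTs, hTc⟩ :=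
      (Set.Infinite.exists_subset_card_eq (hinf : S.Infinite) (4*(K+4)+1))
    have := key T hTs
    omega
  refine ⟨hfin, ?_⟩
  have h1 : ↑hfin.toFinset ⊆ S := by rw [Set.Finite.coe_toFinset]
  have h2 := key hfin.toFinset h1
  rwa [← Set.ncard_coe_finset, Set.Finite.coe_toFinset] at h2
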